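/- arXiv:0711.4063 — 4 statements merged into one kernel-verified Lean document; each statement's English description precedes it below -/
import Mathlib

section
/- The family of metrics g(t) = e^{-2z} dx^2 + e^{2z} dy^2 + 4t dz^2 on R^3, defined for t > 0, satisfies the Ricci flow equation ∂g/∂t = -2 Ric(g(t)). -/
/- STATEMENT 0: The family of metrics g(t) = e^{-2z} dx² + e^{2z} dy² + 4t dz² on ℝ³
(t > 0) satisfies the Ricci flow equation ∂g/∂t = -2 Ric(g(t)).
We work in coordinates on ℝ³ (modelled as `Fin 3 → ℝ`); below `ricci` is the Ricci
tensor of a metric in coordinates, built from the Christoffel symbols. -/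

noncomputable section

/-- Partial derivative in the `i`-th coordinate direction. -/
def pd {n : ℕ} (i : Fin n) (h : (Fin n → ℝ) → ℝ) (x : Fin n → ℝ) : ℝ :=
  fderiv ℝ h x (Pi.single i 1)

/-- Christoffel symbols Γ^k_{ij} of a metric `g` given in coordinates. -/
def christoffel {n : ℕ} (g : (Fin n → ℝ) → Matrix (Fin n) (Fin n) ℝ)
    (x : Fin n → ℝ) (k i j : Fin n) : ℝ :=
  (1 / 2) * ∑ l, (g x)⁻¹ k l *
    (pd i (fun y => g y l j) x + pd j (fun y => g y l i) x - pd l (fun y => g y i j) x)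

/-- The Ricci tensor of a metric `g` in coordinates:
`R_{ij} = ∂_k Γ^k_{ij} - ∂_i Γ^k_{kj} + Γ^k_{kl} Γ^l_{ij} - Γ^k_{il} Γ^l_{kj}`. -/
def ricci {n : ℕ} (g : (Fin n → ℝ) → Matrix (Fin n) (Fin n) ℝ)
    (x : Fin n → ℝ) (i j : Fin n) : ℝ :=
  (∑ k, pd k (fun y => christoffel g y k i j) x)
    - (∑ k, pd i (fun y => christoffel g y k k j) x)
    + (∑ k, ∑ l, christoffel g x k k l * christoffel g x l i j)
    - (∑ k, ∑ l, christoffel g x k i l * christoffel g x l k j)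

/-- The Sol-type expanding soliton metric `e^{-2z} dx² + e^{2z} dy² + 4t dz²`,
with coordinates `x = p 0`, `y = p 1`, `z = p 2`. -/
def gSolExpander (t : ℝ) (p : Fin 3 → ℝ) : Matrix (Fin 3) (Fin 3) ℝ :=
  Matrix.diagonal ![Real.exp (-2 * p 2), Real.exp (2 * p 2), 4 * t]

/-!
The metric depends on the point only through the height `z`, so every coordinate derivative
other than `∂_z` vanishes. Its only nonzero Christoffel symbols are `Γ^x_{xz} = -1`,
`Γ^y_{yz} = 1`, `Γ^z_{xx} = e^{-2z}/(4t)` and `Γ^z_{yy} = -e^{2z}/(4t)`. In `R_{xx}` and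
`R_{yy}` the `∂_z Γ^z` term cancels the quadratic terms, while
`R_{zz} = -Γ^x_{zx} Γ^x_{xz} - Γ^y_{zy} Γ^y_{yz} = -2`. Hence `-2 Ric = 4 dz² = ∂_t g` for every `t > 0`.
-/

theorem pd_comp_apply {n : ℕ} {f : ℝ → ℝ} {f' : ℝ} (i k : Fin n) {x : Fin n → ℝ}
    (hf : HasDerivAt f f' (x k)) :
    pd i (fun y => f (y k)) x = if i = k then f' else 0 := by
  have hcomp : HasFDerivAt (fun y : Fin n → ℝ => f (y k)) (f' • ContinuousLinearMap.proj k) x :=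
    hf.comp_hasFDerivAt x (hasFDerivAt_apply (𝕜 := ℝ) k x)
  rw [pd, hcomp.fderiv]
  by_cases h : i = k <;> simp [h, eq_comm]

theorem Real.hasDerivAt_exp_const_mul (c z : ℝ) :
    HasDerivAt (fun w => Real.exp (c * w)) (c * Real.exp (c * z)) z := by
  simpa [mul_comm] using ((hasDerivAt_id z).const_mul c).exp

theorem gSolExpander_inv {t : ℝ} (ht : t ≠ 0) (p : Fin 3 → ℝ) :
    (gSolExpander t p)⁻¹
      = Matrix.diagonal ![Real.exp (2 * p 2), Real.exp (-2 * p 2), (4 * t)⁻¹] := by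
  refine Matrix.inv_eq_right_inv ?_
  rw [gSolExpander, Matrix.diagonal_mul_diagonal, ← Matrix.diagonal_one]
  congr 1
  ext i
  fin_cases i <;> simp [← Real.exp_add]
  field_simp

-- `gSolExpander t y` is definitionally `gSolExpander t ![0, 0, y 2]`: only the height enters.
theorem hasDerivAt_gSolExpander_height (t z : ℝ) (i j : Fin 3) :
    HasDerivAt (fun w => gSolExpander t ![0, 0, w] i j)
      (Matrix.diagonal ![-2 * Real.exp (-2 * z), 2 * Real.exp (2 * z), 0] i j) z := by
  fin_cases i <;> fin_cases j
  all_goals try exact hasDerivAt_const z _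
  · exact Real.hasDerivAt_exp_const_mul (-2) z
  · exact Real.hasDerivAt_exp_const_mul 2 z

theorem pd_gSolExpander (t : ℝ) (a i j : Fin 3) (x : Fin 3 → ℝ) :
    pd a (fun y => gSolExpander t y i j) x
      = if a = 2 then Matrix.diagonal ![-2 * Real.exp (-2 * x 2), 2 * Real.exp (2 * x 2), 0] i j
        else 0 :=
  pd_comp_apply a 2 (hasDerivAt_gSolExpander_height t (x 2) i j)

def solChristoffel (t z : ℝ) : Fin 3 → Fin 3 → Fin 3 → ℝ :=
  ![![![0, 0, -1], ![0, 0, 0], ![-1, 0, 0]],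
    ![![0, 0, 0], ![0, 0, 1], ![0, 1, 0]],
    ![![Real.exp (-2 * z) / (4 * t), 0, 0], ![0, -Real.exp (2 * z) / (4 * t), 0], ![0, 0, 0]]]

def solChristoffelDeriv (t z : ℝ) : Fin 3 → Fin 3 → Fin 3 → ℝ :=
  ![0, 0, ![![-Real.exp (-2 * z) / (2 * t), 0, 0], ![0, -Real.exp (2 * z) / (2 * t), 0], 0]]

theorem christoffel_gSolExpander {t : ℝ} (ht : t ≠ 0) (p : Fin 3 → ℝ) (k i j : Fin 3) :
    christoffel (gSolExpander t) p k i j = solChristoffel t (p 2) k i j := by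
  simp only [christoffel, gSolExpander_inv ht, pd_gSolExpander, Fin.sum_univ_three,
    Matrix.diagonal_apply]
  fin_cases k <;> fin_cases i <;> fin_cases j <;>
    simp [solChristoffel, Real.exp_neg] <;> field_simp

theorem hasDerivAt_solChristoffel (t z : ℝ) (k i j : Fin 3) :
    HasDerivAt (fun w => solChristoffel t w k i j) (solChristoffelDeriv t z k i j) z := by
  fin_cases k <;> fin_cases i <;> fin_cases j
  all_goals try exact hasDerivAt_const z _
  · exact ((Real.hasDerivAt_exp_const_mul (-2) z).div_const (4 * t)).congr_deriv
      (by simp [solChristoffelDeriv]; ring)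
  · exact ((Real.hasDerivAt_exp_const_mul 2 z).neg.div_const (4 * t)).congr_deriv
      (by simp [solChristoffelDeriv]; ring)

theorem pd_christoffel_gSolExpander {t : ℝ} (ht : t ≠ 0) (a k i j : Fin 3) (x : Fin 3 → ℝ) :
    pd a (fun y => christoffel (gSolExpander t) y k i j) x
      = if a = 2 then solChristoffelDeriv t (x 2) k i j else 0 := by
  simp only [christoffel_gSolExpander ht]
  exact pd_comp_apply a 2 (hasDerivAt_solChristoffel t (x 2) k i j)

theorem ricci_gSolExpander {t : ℝ} (ht : t ≠ 0) (p : Fin 3 → ℝ) (i j : Fin 3) :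
    ricci (gSolExpander t) p i j = Matrix.diagonal ![0, 0, -2] i j := by
  simp only [ricci, pd_christoffel_gSolExpander ht]
  simp only [christoffel_gSolExpander ht, Fin.sum_univ_three]
  fin_cases i <;> fin_cases j <;> simp [solChristoffel, solChristoffelDeriv] <;> ring

theorem hasDerivAt_gSolExpander_time (t : ℝ) (p : Fin 3 → ℝ) (i j : Fin 3) :
    HasDerivAt (fun s => gSolExpander s p i j) (Matrix.diagonal ![0, 0, 4] i j) t := by
  fin_cases i <;> fin_cases j
  all_goals try exact hasDerivAt_const t _
  exact ((hasDerivAt_id t).const_mul 4).congr_deriv (by simp)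

/-- The Sol-type expanding soliton satisfies the Ricci flow equation
`∂g/∂t = -2 Ric(g(t))` for all `t > 0`. -/
theorem sol_expander_is_ricci_flow :
    ∀ t : ℝ, 0 < t → ∀ (p : Fin 3 → ℝ) (i j : Fin 3),
      HasDerivAt (fun s => gSolExpander s p i j)
        (-2 * ricci (gSolExpander t) p i j) t := by
  intro t ht p i j
  convert hasDerivAt_gSolExpander_time t p i j using 1
  rw [ricci_gSolExpander ht.ne']
  fin_cases i <;> fin_cases j <;> norm_num

end
end

section
/- Let (M,g) be a closed n-manifold and suppose R(x,t) is a smooth function on M × [0,T] satisfying ∂R/∂t = ΔR + 2|Ric|² + (2/n)R̄² - ⟨∇f, ∇R⟩ for smooth f, where the zeroth-order terms are nonnegative and include (2/n)R² with R the function itself. If ∫_M R dvol = 0 at each time and R is not identically 0, then R_min < 0 leads to a contradiction with the minimum principle; hence R ≡ 0. -/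
open MeasureTheory

/-! At a minimum point x₀ of R the minimum principle kills ∇²R and ⟨∇f, ∇R⟩, so the equation
leaves a + (2/n) R(x₀)² ≤ 0, whence R(x₀) = 0 and R ≥ 0. A continuous nonnegative function with
vanishing integral against a measure charging every nonempty open set vanishes identically. -/

theorem nonneg_of_nonneg_at_isMin {X : Type*} [TopologicalSpace X] [CompactSpace X]
    {g : X → ℝ} (hg : Continuous g) (hmin : ∀ x, (∀ y, g x ≤ g y) → 0 ≤ g x) (x : X) :
    0 ≤ g x := by
  obtain ⟨x₀, -, hx₀⟩ :=
    isCompact_univ.exists_isMinOn ⟨x, Set.mem_univ x⟩ hg.continuousOn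
  have hx₀_min : ∀ y, g x₀ ≤ g y := fun y ↦ hx₀ (Set.mem_univ y)
  exact (hmin x₀ hx₀_min).trans (hx₀_min x)

theorem Continuous.eq_zero_of_nonneg_of_integral_eq_zero {X : Type*} [TopologicalSpace X]
    [CompactSpace X] [MeasurableSpace X] [OpensMeasurableSpace X] (μ : Measure X)
    [IsFiniteMeasure μ] [μ.IsOpenPosMeasure] {g : X → ℝ} (hg : Continuous g) (hg_nonneg : 0 ≤ g)
    (hint : ∫ x, g x ∂μ = 0) : g = 0 := by
  have hg_int : Integrable g μ :=
    hg.integrable_of_hasCompactSupport (HasCompactSupport.of_compactSpace g)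
  rw [integral_eq_zero_iff_of_nonneg hg_nonneg hg_int] at hint
  exact (hg.ae_eq_iff_eq μ continuous_const).mp hint

theorem scalar_curvature_vanishes_general
    {M : Type*} [TopologicalSpace M] [CompactSpace M]
    [MeasurableSpace M] [OpensMeasurableSpace M]
    (μ : Measure M) [IsFiniteMeasure μ]
    -- the volume measure is positive on nonempty open sets
    (hμpos : ∀ U : Set M, IsOpen U → U.Nonempty → μ U ≠ 0)
    (n : ℕ) (hn : 0 < n)
    (R a Lap gradTerm : M → ℝ)
    (hRcont : Continuous R)
    -- the zeroth order terms 2|A|² + 2|B|² are nonnegative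
    (ha : ∀ x, 0 ≤ a x)
    -- the pointwise equation ∇²R + 2|A|² + 2|B|² + (2/n) R² = ⟨∇f, ∇R⟩
    (heq : ∀ x, Lap x + a x + (2 / (n : ℝ)) * (R x) ^ 2 = gradTerm x)
    -- minimum principle: at a minimum point of R, ∇²R ≥ 0 and ⟨∇f, ∇R⟩ = 0
    (hmin : ∀ x, (∀ y, R x ≤ R y) → 0 ≤ Lap x ∧ gradTerm x = 0)
    -- the integral of R over M vanishes
    (hint : ∫ x, R x ∂μ = 0) :
    ∀ x, R x = 0 := by
  have hR_min_zero : ∀ x, (∀ y, R x ≤ R y) → R x = 0 := by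
    intro x hx
    obtain ⟨hLap, hgrad⟩ := hmin x hx
    have hsq : (2 / (n : ℝ)) * R x ^ 2 ≤ 0 := by linarith [heq x, ha x]
    have hsq' : R x ^ 2 ≤ 0 := nonpos_of_mul_nonpos_right hsq (by positivity)
    exact pow_eq_zero_iff two_ne_zero |>.mp (le_antisymm hsq' (sq_nonneg _))
  have hR_nonneg : 0 ≤ R :=
    nonneg_of_nonneg_at_isMin hRcont fun x hx ↦ (hR_min_zero x hx).ge
  have : μ.IsOpenPosMeasure := ⟨hμpos⟩
  exact congrFun (hRcont.eq_zero_of_nonneg_of_integral_eq_zero μ hR_nonneg hint)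

theorem scalar_curvature_vanishes
    {M : Type*} [TopologicalSpace M] [CompactSpace M] [Nonempty M]
    [MeasurableSpace M] [OpensMeasurableSpace M]
    (μ : Measure M) [IsFiniteMeasure μ] (hμ : μ ≠ 0)
    -- the volume measure is positive on nonempty open sets
    (hμpos : ∀ U : Set M, IsOpen U → U.Nonempty → μ U ≠ 0)
    (n : ℕ) (hn : 0 < n)
    (R a Lap gradTerm : M → ℝ)
    (hRcont : Continuous R)
    -- the zeroth order terms 2|A|² + 2|B|² are nonnegative
    (ha : ∀ x, 0 ≤ a x)
    -- the pointwise equation ∇²R + 2|A|² + 2|B|² + (2/n) R² = ⟨∇f, ∇R⟩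
    (heq : ∀ x, Lap x + a x + (2 / (n : ℝ)) * (R x) ^ 2 = gradTerm x)
    -- minimum principle: at a minimum point of R, ∇²R ≥ 0 and ⟨∇f, ∇R⟩ = 0
    (hmin : ∀ x, (∀ y, R x ≤ R y) → 0 ≤ Lap x ∧ gradTerm x = 0)
    -- the integral of R over M vanishes
    (hint : ∫ x, R x ∂μ = 0) :
    ∀ x, R x = 0 :=
  scalar_curvature_vanishes_general μ hμpos n hn R a Lap gradTerm hRcont ha heq hmin hint
end

section
/- Let B be a closed Riemannian n-manifold carrying fields G_{ij}, A, g, and let f ∈ C^∞(B), t > 0, with (4πt)^{-n/2} ∫_B e^{-f} dvol_B = 1. Then the modified W₊ functional satisfies W₊(G, A, g, f, t) ≥ t·R̄_min + n + (n/2)ln(4π) - ln(t^{-n/2} vol(B, g)), where R̄ is the scalar curvature of the associated total-space metric. -/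
open MeasureTheory Real

/-! With `p = (4πt)^{-n/2} e^{-f}`, a probability density on `B`, the `W₊` integrand is
`(t (w + R̄) + n) p + p log p - p log (4πt)^{-n/2}`. The first term integrates to at least
`t R̄_min + n` because `w ≥ 0`. The entropy `∫ p log p` is at least `-log vol(B)`: this is
Jensen's inequality for the convex function `x log x`, in its tangent-line form
`q - 1 ≤ q log q` applied to `q = p · vol(B)`. -/

theorem Continuous.integrable_of_compactSpace {α E : Type*} [TopologicalSpace α] [CompactSpace α]
    [MeasurableSpace α] [OpensMeasurableSpace α] [NormedAddCommGroup E] {μ : Measure α}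
    [IsFiniteMeasure μ] {g : α → E} (hg : Continuous g) : Integrable g μ :=
  hg.integrable_of_hasCompactSupport (.of_compactSpace g)

section Density

variable {α : Type*} [MeasurableSpace α] {μ : Measure α} {p : α → ℝ}

theorem measureReal_univ_pos_of_integral_ne_zero [IsFiniteMeasure μ] {g : α → ℝ}
    (h : ∫ x, g x ∂μ ≠ 0) : 0 < μ.real Set.univ :=
  have : NeZero μ := ⟨by rintro rfl; simp at h⟩
  measureReal_univ_pos

theorem le_integral_mul_of_forall_le {g : α → ℝ} {m : ℝ} (hp : 0 ≤ p) (hpi : Integrable p μ)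
    (hp1 : ∫ x, p x ∂μ = 1) (hgp : Integrable (fun x => g x * p x) μ) (hm : ∀ x, m ≤ g x) :
    m ≤ ∫ x, g x * p x ∂μ :=
  calc m = ∫ x, m * p x ∂μ := by rw [integral_const_mul, hp1, mul_one]
    _ ≤ ∫ x, g x * p x ∂μ :=
      integral_mono (hpi.const_mul m) hgp fun x => mul_le_mul_of_nonneg_right (hm x) (hp x)

theorem neg_log_measureReal_univ_le_integral_mul_log [IsFiniteMeasure μ] (hp : 0 ≤ p)
    (hpi : Integrable p μ) (hpl : Integrable (fun x => p x * log (p x)) μ)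
    (hp1 : ∫ x, p x ∂μ = 1) :
    -log (μ.real Set.univ) ≤ ∫ x, p x * log (p x) ∂μ := by
  set V := μ.real Set.univ
  have hV : 0 < V := measureReal_univ_pos_of_integral_ne_zero (hp1 ▸ one_ne_zero)
  have tangent : ∀ x, p x - V⁻¹ ≤ p x * log (p x) + log V * p x := by
    intro x
    rcases (hp x).eq_or_lt with hx | hx
    · rw [← hx]; simpa using hV.le
    have key := self_sub_one_le_mul_log (mul_pos hx hV).le
    rw [log_mul hx.ne' hV.ne'] at key
    have hVV : V * V⁻¹ = 1 := mul_inv_cancel₀ hV.ne'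
    nlinarith [inv_pos.mpr hV]
  have hint : ∫ x, (p x - V⁻¹) ∂μ ≤ ∫ x, (p x * log (p x) + log V * p x) ∂μ :=
    integral_mono (hpi.sub (integrable_const V⁻¹)) (hpl.add (hpi.const_mul (log V))) tangent
  rw [integral_sub hpi (integrable_const _), integral_add hpl (hpi.const_mul _),
    integral_const_mul, integral_const, hp1, smul_eq_mul, mul_inv_cancel₀ hV.ne'] at hint
  linarith

end Density

theorem le_integral_mul_exp_neg {α : Type*} [TopologicalSpace α] [CompactSpace α]
    [MeasurableSpace α] [OpensMeasurableSpace α] {μ : Measure α} [IsFiniteMeasure μ]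
    {f g : α → ℝ} {c m : ℝ} (hc : 0 < c) (hf : Continuous f) (hg : Continuous g)
    (hm : ∀ x, m ≤ g x) (hnorm : c * ∫ x, exp (-f x) ∂μ = 1) :
    m - log c - log (μ.real Set.univ) ≤ ∫ x, (g x - f x) * (c * exp (-f x)) ∂μ := by
  set p : α → ℝ := fun x => c * exp (-f x)
  have hpc : Continuous p := by fun_prop
  have hp0 : 0 ≤ p := fun x => by positivity
  have hp1 : ∫ x, p x ∂μ = 1 := by rw [integral_const_mul]; exact hnorm
  have hIg : Integrable (fun x => g x * p x) μ := (hg.mul hpc).integrable_of_compactSpace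
  have hIent : Integrable (fun x => p x * log (p x)) μ := hpc.mul_log.integrable_of_compactSpace
  have hIsum : Integrable (fun x => g x * p x + p x * log (p x)) μ := hIg.add hIent
  have hsplit : ∀ x, (g x - f x) * p x = g x * p x + p x * log (p x) - log c * p x := by
    intro x
    rw [log_mul hc.ne' (exp_pos _).ne', log_exp]
    ring
  rw [integral_congr_ae (.of_forall hsplit),
    integral_sub hIsum (hpc.integrable_of_compactSpace.const_mul _), integral_add hIg hIent,
    integral_const_mul, hp1]
  have hmean := le_integral_mul_of_forall_le hp0 hpc.integrable_of_compactSpace hp1 hIg hm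
  have hentropy := neg_log_measureReal_univ_le_integral_mul_log hp0 hpc.integrable_of_compactSpace hIent hp1
  linarith

theorem Wplus_lower_bound_general
    {B : Type*} [TopologicalSpace B] [CompactSpace B]
    [MeasurableSpace B] [OpensMeasurableSpace B]
    (vol : Measure B) [IsFiniteMeasure vol]
    (n : ℕ) (t : ℝ) (ht : 0 < t)
    (f w Rbar : B → ℝ) (Rbarmin : ℝ)
    (hf : Continuous f) (hw : Continuous w) (hRbar : Continuous Rbar)
    -- w = |∇f + ∇ ln √det G|² is nonnegative
    (hwpos : ∀ x, 0 ≤ w x)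
    -- R̄_min is a lower bound for the total-space scalar curvature R̄
    (hmin : ∀ x, Rbarmin ≤ Rbar x)
    -- normalization: (4πt)^{-n/2} ∫_B e^{-f} dvol = 1
    (hnorm : (4 * π * t) ^ (-(n : ℝ) / 2) * ∫ x, Real.exp (-f x) ∂vol = 1)
    -- W₊(G,A,g,f,t), rewritten via the identity (4.46.5)
    (Wplus : ℝ)
    (hW : Wplus = ∫ x, (t * (w x + Rbar x) - f x + n) *
        ((4 * π * t) ^ (-(n : ℝ) / 2) * Real.exp (-f x)) ∂vol) :
    Wplus ≥ t * Rbarmin + n + ((n : ℝ) / 2) * Real.log (4 * π)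
      - Real.log (t ^ (-(n : ℝ) / 2) * (vol Set.univ).toReal) := by
  have h4πt : 0 < 4 * π * t := by positivity
  have hV : 0 < vol.real Set.univ :=
    measureReal_univ_pos_of_integral_ne_zero (right_ne_zero_of_mul_eq_one hnorm)
  have hbound := le_integral_mul_exp_neg (g := fun x => t * (w x + Rbar x) + n)
    (m := t * Rbarmin + n) (by positivity) hf (by fun_prop)
    (fun x => by nlinarith [hwpos x, hmin x]) hnorm
  have hlog4πt : log ((4 * π * t) ^ (-(n : ℝ) / 2)) = -(n : ℝ) / 2 * (log (4 * π) + log t) := by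
    rw [log_rpow h4πt, log_mul (by positivity) ht.ne']
  have hlogtV : log (t ^ (-(n : ℝ) / 2) * vol.real Set.univ) =
      -(n : ℝ) / 2 * log t + log (vol.real Set.univ) := by
    rw [log_mul (rpow_pos_of_pos ht _).ne' hV.ne', log_rpow ht]
  calc t * Rbarmin + n + (n : ℝ) / 2 * log (4 * π) - log (t ^ (-(n : ℝ) / 2) * vol.real Set.univ)
      = t * Rbarmin + n - log ((4 * π * t) ^ (-(n : ℝ) / 2)) - log (vol.real Set.univ) := by
        rw [hlog4πt, hlogtV]; ring
    _ ≤ _ := hbound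
    _ = Wplus := by rw [hW]; congr 1; ext x; ring

theorem Wplus_lower_bound
    {B : Type*} [TopologicalSpace B] [CompactSpace B] [Nonempty B]
    [MeasurableSpace B] [OpensMeasurableSpace B]
    (vol : Measure B) [IsFiniteMeasure vol]
    (n : ℕ) (t : ℝ) (ht : 0 < t)
    (f w Rbar : B → ℝ) (Rbarmin : ℝ)
    (hf : Continuous f) (hw : Continuous w) (hRbar : Continuous Rbar)
    -- w = |∇f + ∇ ln √det G|² is nonnegative
    (hwpos : ∀ x, 0 ≤ w x)
    -- R̄_min is a lower bound for the total-space scalar curvature R̄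
    (hmin : ∀ x, Rbarmin ≤ Rbar x)
    -- normalization: (4πt)^{-n/2} ∫_B e^{-f} dvol = 1
    (hnorm : (4 * π * t) ^ (-(n : ℝ) / 2) * ∫ x, Real.exp (-f x) ∂vol = 1)
    -- W₊(G,A,g,f,t), rewritten via the identity (4.46.5)
    (Wplus : ℝ)
    (hW : Wplus = ∫ x, (t * (w x + Rbar x) - f x + n) *
        ((4 * π * t) ^ (-(n : ℝ) / 2) * Real.exp (-f x)) ∂vol) :
    Wplus ≥ t * Rbarmin + n + ((n : ℝ) / 2) * Real.log (4 * π)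
      - Real.log (t ^ (-(n : ℝ) / 2) * (vol Set.univ).toReal) :=
  Wplus_lower_bound_general vol n t ht f w Rbar Rbarmin hf hw hRbar hwpos hmin hnorm Wplus hW
end

section
/- Let X be a real N×N diagonal traceless matrix with Tr(X²) > 0, and define on R × R^N (coordinates (b, y)) and t > 0 the metric g(t) = (t/2)Tr(X²) db² + Σ_{ij} (e^{bX})_{ij} dy^i dy^j. Then g(t) satisfies the Ricci flow equation ∂g/∂t = -2 Ric(g(t)). -/
/-!
For a diagonal metric `g = diag(w_i e^{b a_i})` on `ℝ^{n+1}` depending only on `b = x₀`, with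
`a₀ = 0`, the Christoffel symbols are constant except for `Γ⁰ᵢᵢ = -a_i g_ii / (2 w₀)`, and a direct
computation gives `Ric = diag(-(Σ a_k²)/4, -(Σ a_k) a_i g_ii / (4 w₀))`. The generalized Sol metric
is of this form with `a = (0, X₁₁, …, X_NN)` and `w = (t Tr(X²)/2, 1, …, 1)`. Since `Tr X = 0`, its
Ricci tensor is `-(Tr(X²)/4) db²`, which is `-1/2` times `∂ₜ g = (Tr(X²)/2) db²`.
-/

noncomputable section

/-- The generalized Sol metric `(t/2)Tr(X²) db² + Σ_{ij} (e^{bX})_{ij} dy^i dy^j`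
on ℝ × ℝ^N, where `b = p 0` and `y^i = p (i+1)`, and `e^{bX}` is the matrix
exponential. -/
def gGenSol (N : ℕ) (X : Matrix (Fin N) (Fin N) ℝ) (t : ℝ)
    (p : Fin (N + 1) → ℝ) : Matrix (Fin (N + 1)) (Fin (N + 1)) ℝ :=
  Matrix.of fun i j =>
    if hi : i = 0 then
      (if j = 0 then t / 2 * (X * X).trace else 0)
    else if hj : j = 0 then 0
    else NormedSpace.exp (p 0 • X) (i.pred hi) (j.pred hj)

theorem pd_comp_apply_zero {n : ℕ} {f : ℝ → ℝ} {f' : ℝ} {x : Fin (n + 1) → ℝ}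
    (hf : HasDerivAt f f' (x 0)) (k : Fin (n + 1)) :
    pd k (fun y => f (y 0)) x = if k = 0 then f' else 0 := by
  have h : HasFDerivAt (fun y : Fin (n + 1) → ℝ => f (y 0)) _ x :=
    hf.hasFDerivAt.comp x (hasFDerivAt_apply 0 x)
  rw [pd, h.fderiv]
  simp [Pi.single_apply, eq_comm]

section ExpDiag

variable {n : ℕ} (w a : Fin (n + 1) → ℝ)

def expDiag (b : ℝ) (i : Fin (n + 1)) : ℝ := w i * Real.exp (b * a i)

def expDiagMetric (x : Fin (n + 1) → ℝ) : Matrix (Fin (n + 1)) (Fin (n + 1)) ℝ :=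
  Matrix.diagonal (expDiag w a (x 0))

def expDiagChristoffel (b : ℝ) (k i j : Fin (n + 1)) : ℝ :=
  (if i = 0 ∧ k = j then a k / 2 else 0) + (if j = 0 ∧ k = i then a k / 2 else 0)
    - (if k = 0 ∧ i = j then a i * expDiag w a b i / (2 * w 0) else 0)

variable {w a}

theorem hasDerivAt_expDiag (b : ℝ) (i : Fin (n + 1)) :
    HasDerivAt (fun b => expDiag w a b i) (a i * expDiag w a b i) b := by
  unfold expDiag
  exact (((hasDerivAt_mul_const (a i)).exp).const_mul (w i)).congr_deriv (by ring)

theorem pd_expDiagMetric (x : Fin (n + 1) → ℝ) (m i j : Fin (n + 1)) :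
    pd m (fun y => expDiagMetric w a y i j) x
      = if m = 0 ∧ i = j then a i * expDiag w a (x 0) i else 0 := by
  have hd : HasDerivAt (fun b => if i = j then expDiag w a b i else 0)
      (if i = j then a i * expDiag w a (x 0) i else 0) (x 0) := by
    split_ifs
    exacts [hasDerivAt_expDiag (x 0) i, hasDerivAt_const _ _]
  simp only [expDiagMetric, Matrix.diagonal_apply]
  rw [pd_comp_apply_zero hd, ite_and]

theorem inv_expDiagMetric (hw : ∀ i, w i ≠ 0) (x : Fin (n + 1) → ℝ) :
    (expDiagMetric w a x)⁻¹ = Matrix.diagonal (fun i => (expDiag w a (x 0) i)⁻¹) := by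
  refine Matrix.inv_eq_left_inv ?_
  rw [expDiagMetric, Matrix.diagonal_mul_diagonal, ← Matrix.diagonal_one]
  congr 1
  ext i
  exact inv_mul_cancel₀ (mul_ne_zero (hw i) (Real.exp_ne_zero _))

theorem christoffel_expDiagMetric (hw : ∀ i, w i ≠ 0) (ha : a 0 = 0)
    (x : Fin (n + 1) → ℝ) (k i j : Fin (n + 1)) :
    christoffel (expDiagMetric w a) x k i j = expDiagChristoffel w a (x 0) k i j := by
  simp only [christoffel, inv_expDiagMetric hw, pd_expDiagMetric, Matrix.diagonal_apply,
    ite_mul, zero_mul, Finset.sum_ite_eq, Finset.mem_univ, if_true, expDiagChristoffel]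
  have hE : (expDiag w a (x 0) k)⁻¹ * (a k * expDiag w a (x 0) k) = a k :=
    by field_simp [expDiag, hw k]
  have hC : (if k = 0 ∧ i = j then (expDiag w a (x 0) k)⁻¹ * (a i * expDiag w a (x 0) i) else 0)
      = if k = 0 ∧ i = j then a i * expDiag w a (x 0) i / w 0 else 0 := by
    split_ifs with h
    · rw [h.1, expDiag, ha, mul_zero, Real.exp_zero, mul_one, div_eq_inv_mul]
    · rfl
  simp only [mul_sub, mul_add, mul_ite, mul_zero, hE, hC]
  split_ifs <;> ring

theorem hasDerivAt_expDiagChristoffel (b : ℝ) (k i j : Fin (n + 1)) :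
    HasDerivAt (fun b => expDiagChristoffel w a b k i j)
      (-(if k = 0 ∧ i = j then a i * (a i * expDiag w a b i) / (2 * w 0) else 0)) b := by
  unfold expDiagChristoffel
  refine ((hasDerivAt_const _ _).sub ?_).congr_deriv (by ring)
  split_ifs
  exacts [((hasDerivAt_expDiag b i).const_mul (a i)).div_const _, hasDerivAt_const _ _]

theorem sum_expDiagChristoffel_self (ha : a 0 = 0) (b : ℝ) (l : Fin (n + 1)) :
    ∑ k, expDiagChristoffel w a b k k l = if l = 0 then (∑ k, a k) / 2 else 0 := by
  simp [expDiagChristoffel, Finset.sum_add_distrib, Finset.sum_sub_distrib, ite_and, ha,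
    Finset.sum_ite_irrel, Finset.sum_div]

theorem sum_mul_expDiagChristoffel (ha : a 0 = 0) (b : ℝ) (i j : Fin (n + 1)) :
    ∑ k, ∑ l, expDiagChristoffel w a b k i l * expDiagChristoffel w a b l k j = if i = j then
      (if i = 0 then (∑ k, a k ^ 2) / 4 else 0) - a i ^ 2 * expDiag w a b i / (2 * w 0) else 0 := by
  simp only [expDiagChristoffel, ite_and, mul_sub, mul_add, mul_ite, sub_mul, add_mul, ite_mul,
    zero_mul, mul_zero, Finset.sum_sub_distrib, Finset.sum_add_distrib, Finset.sum_ite_irrel,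
    Finset.sum_ite_eq', Finset.mem_univ, ↓reduceIte, Finset.sum_const_zero, ha, zero_div, ite_self,
    add_zero, zero_sub, sub_zero]
  rcases eq_or_ne i j with rfl | hij
  · rcases eq_or_ne i 0 with rfl | hi
    · simpa [ha, Finset.sum_div] using Finset.sum_congr rfl fun k _ => by ring
    · simp only [hi, if_false, if_true]
      ring
  · rcases eq_or_ne j 0 with rfl | hj
    · simp [hij, Ne.symm hij]
    · simp [hij, Ne.symm hij, hj]

theorem pd_christoffel_expDiagMetric (hw : ∀ i, w i ≠ 0) (ha : a 0 = 0)
    (x : Fin (n + 1) → ℝ) (m k i j : Fin (n + 1)) :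
    pd m (fun y => christoffel (expDiagMetric w a) y k i j) x = if m = 0 then
      -(if k = 0 ∧ i = j then a i * (a i * expDiag w a (x 0) i) / (2 * w 0) else 0) else 0 := by
  simp only [christoffel_expDiagMetric hw ha]
  exact pd_comp_apply_zero (hasDerivAt_expDiagChristoffel (x 0) k i j) m

theorem ricci_expDiagMetric (hw : ∀ i, w i ≠ 0) (ha : a 0 = 0)
    (x : Fin (n + 1) → ℝ) (i j : Fin (n + 1)) :
    ricci (expDiagMetric w a) x i j = if i = j then
      -((if i = 0 then ∑ k, a k ^ 2 else 0) + (∑ k, a k) * a i * expDiag w a (x 0) i / w 0) / 4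
      else 0 := by
  have hT3 : ∑ k, ∑ l, expDiagChristoffel w a (x 0) k k l * expDiagChristoffel w a (x 0) l i j
      = (∑ k, a k) / 2 * expDiagChristoffel w a (x 0) 0 i j := by
    simp only [Finset.sum_comm (γ := Fin (n + 1)), ← Finset.sum_mul,
      sum_expDiagChristoffel_self ha, ite_mul, zero_mul, Finset.sum_ite_eq', Finset.mem_univ,
      if_true]
  simp only [ricci, pd_christoffel_expDiagMetric hw ha]
  simp only [christoffel_expDiagMetric hw ha, hT3, sum_mul_expDiagChristoffel ha]
  simp only [ite_and, Finset.sum_ite_eq', Finset.mem_univ, ↓reduceIte, Finset.sum_ite_irrel,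
    Finset.sum_neg_distrib, ha, zero_mul, mul_zero, zero_div, ite_self, neg_zero,
    Finset.sum_const_zero, sub_zero, expDiagChristoffel, add_zero, true_and, zero_sub, mul_neg,
    mul_ite, neg_add_rev]
  split_ifs <;> ring

end ExpDiag

theorem Matrix.IsDiag.exp_smul {m : Type*} [Fintype m] [DecidableEq m] {X : Matrix m m ℝ}
    (hX : X.IsDiag) (b : ℝ) :
    NormedSpace.exp (b • X) = Matrix.diagonal fun k => Real.exp (b * X k k) := by
  rw [← hX.diagonal_diag, ← Matrix.diagonal_smul, Matrix.exp_diagonal]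
  ext i j
  simp [Matrix.diagonal_apply, Real.exp_eq_exp_ℝ]

theorem Matrix.IsDiag.trace_mul_self {m : Type*} [Fintype m] [DecidableEq m]
    {X : Matrix m m ℝ} (hX : X.IsDiag) : (X * X).trace = ∑ k, X k k ^ 2 := by
  rw [← hX.diagonal_diag, Matrix.diagonal_mul_diagonal, Matrix.trace_diagonal]
  simp [sq]

section GenSol

variable (N : ℕ) (X : Matrix (Fin N) (Fin N) ℝ)

def solExponent : Fin (N + 1) → ℝ := Fin.cons 0 fun m => X m m

def solWeight (t : ℝ) : Fin (N + 1) → ℝ := Fin.cons (t / 2 * (X * X).trace) 1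

theorem sum_solExponent : ∑ k, solExponent N X k = X.trace := by
  simp [solExponent, Fin.sum_univ_succ, Matrix.trace]

variable {N X}

theorem sum_solExponent_sq (hX : X.IsDiag) : ∑ k, solExponent N X k ^ 2 = (X * X).trace := by
  simp [solExponent, Fin.sum_univ_succ, hX.trace_mul_self]

theorem gGenSol_eq_expDiagMetric (hX : X.IsDiag) (t : ℝ) :
    gGenSol N X t = expDiagMetric (solWeight N X t) (solExponent N X) := by
  funext p
  ext i j
  cases i using Fin.cases <;> cases j using Fin.cases <;>
    simp [gGenSol, expDiagMetric, expDiag, solWeight, solExponent, hX.exp_smul,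
      Matrix.diagonal_apply, fun k : Fin N => (Fin.succ_ne_zero k).symm]

theorem hasDerivAt_gGenSol_time (t : ℝ) (p : Fin (N + 1) → ℝ) (i j : Fin (N + 1)) :
    HasDerivAt (fun s => gGenSol N X s p i j)
      (if i = 0 ∧ j = 0 then (X * X).trace / 2 else 0) t := by
  by_cases h : i = 0 ∧ j = 0
  · obtain ⟨rfl, rfl⟩ := h
    simp only [gGenSol, Matrix.of_apply, dif_pos, if_true, and_self]
    exact ((hasDerivAt_id t).div_const 2).mul_const _ |>.congr_deriv (by ring)
  · have hconst : (fun s => gGenSol N X s p i j) = fun _ => gGenSol N X 0 p i j := by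
      funext s
      simp only [gGenSol, Matrix.of_apply]
      split_ifs <;> simp_all
    rw [if_neg h, hconst]
    exact hasDerivAt_const _ _

theorem ricci_gGenSol (hdiag : X.IsDiag) (htraceless : X.trace = 0) (hX : 0 < (X * X).trace)
    {t : ℝ} (ht : 0 < t) (p : Fin (N + 1) → ℝ) (i j : Fin (N + 1)) :
    ricci (gGenSol N X t) p i j = if i = 0 ∧ j = 0 then -((X * X).trace / 4) else 0 := by
  have hw : ∀ k, solWeight N X t k ≠ 0 :=
    Fin.cases (by simp only [solWeight, Fin.cons_zero]; positivity) fun _ => one_ne_zero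
  rw [gGenSol_eq_expDiagMetric hdiag, ricci_expDiagMetric hw rfl, sum_solExponent, htraceless,
    sum_solExponent_sq hdiag]
  rcases eq_or_ne i j with rfl | hij
  · simp only [zero_mul, zero_div, add_zero, if_true, and_self]
    split_ifs <;> ring
  · rw [if_neg hij, if_neg fun h => hij (h.1.trans h.2.symm)]

end GenSol

/-- The generalized Sol-solution satisfies the Ricci flow equation
`∂g/∂t = -2 Ric(g(t))` for all `t > 0`, whenever `X` is diagonal, traceless,
and `Tr(X²) > 0`. -/
theorem generalized_sol_is_ricci_flow
    (N : ℕ) (X : Matrix (Fin N) (Fin N) ℝ)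
    (hdiag : X.IsDiag) (htraceless : X.trace = 0) (hX : 0 < (X * X).trace) :
    ∀ t : ℝ, 0 < t → ∀ (p : Fin (N + 1) → ℝ) (i j : Fin (N + 1)),
      HasDerivAt (fun s => gGenSol N X s p i j)
        (-2 * ricci (gGenSol N X t) p i j) t := by
  intro t ht p i j
  rw [ricci_gGenSol hdiag htraceless hX ht]
  convert hasDerivAt_gGenSol_time t p i j using 1
  split_ifs <;> ring

end
end
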